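/- If w ∈ A_1(ℝ) and s > 1 is such that w^s ∈ A_1(ℝ), then w ∈ RH_s(ℝ); conversely if w ∈ A_1(ℝ) ∩ RH_s(ℝ) for some s > 1 then w^s ∈ A_∞(ℝ). -/

import Mathlib

/-!
Both directions are pointwise manipulations of the defining inequalities. If `w ^ s ∈ A_1`
with constant `C`, then a.e. on `[a, b]` we have `⨍ w ^ s ≤ C w ^ s`, i.e.
`(⨍ w ^ s) ^ (1/s) ≤ C ^ (1/s) w`, and averaging over `[a, b]` gives the reverse Hölder
inequality. Conversely, chaining `(⨍ w ^ s) ^ (1/s) ≤ C₂ ⨍ w ≤ C₂ C₁ w(x)` and raising to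
the power `s` shows `w ^ s ∈ A_1 ⊆ A_∞`.
-/

open MeasureTheory

noncomputable def intervalAvg (w : ℝ → ℝ) (a b : ℝ) : ℝ := (∫ x in a..b, w x) / (b - a)

def ApWith (p : ℝ) (w : ℝ → ℝ) (C : ℝ) : Prop :=
  ∀ a b : ℝ, a < b →
    intervalAvg w a b * (intervalAvg (fun x => w x ^ (-1 / (p - 1))) a b) ^ (p - 1) ≤ C

def A1With (w : ℝ → ℝ) (C : ℝ) : Prop :=
  ∀ᵐ x ∂(volume : Measure ℝ), ∀ a b : ℝ, a < b → x ∈ Set.Icc a b →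
    intervalAvg w a b ≤ C * w x

/-- `w ∈ A_1(ℝ)`. -/
def MemA1 (w : ℝ → ℝ) : Prop := ∃ C > (0:ℝ), A1With w C

/-- `w ∈ RH_s(ℝ)`: the reverse Hölder class of exponent `s`. -/
def MemRH (s : ℝ) (w : ℝ → ℝ) : Prop :=
  ∃ C > (0:ℝ), ∀ a b : ℝ, a < b →
    (intervalAvg (fun x => w x ^ s) a b) ^ (1 / s) ≤ C * intervalAvg w a b

/-- `w ∈ A_∞(ℝ) = ⋃_{p ≥ 1} A_p(ℝ)`. -/
def MemAinf (w : ℝ → ℝ) : Prop := MemA1 w ∨ ∃ p > (1:ℝ), ∃ C > (0:ℝ), ApWith p w C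

section IntervalAvg

variable {w : ℝ → ℝ} {a b : ℝ}

lemma intervalAvg_nonneg (hw : ∀ x, 0 ≤ w x) (hab : a ≤ b) : 0 ≤ intervalAvg w a b :=
  div_nonneg (intervalIntegral.integral_nonneg hab fun x _ => hw x) (sub_nonneg.2 hab)

lemma le_intervalAvg_of_ae_le {c : ℝ} (hab : a < b) (hint : IntegrableOn w (Set.Ioc a b))
    (h : ∀ᵐ x ∂volume.restrict (Set.Ioc a b), c ≤ w x) : c ≤ intervalAvg w a b := by
  have hba : 0 < b - a := sub_pos.2 hab
  rw [intervalAvg, le_div_iff₀ hba, intervalIntegral.integral_of_le hab.le]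
  calc c * (b - a) = ∫ _ in Set.Ioc a b, c := by simp [hab.le, mul_comm]
    _ ≤ ∫ x in Set.Ioc a b, w x :=
      integral_mono_ae (integrableOn_const (by simp [Real.volume_Ioc])) hint h

end IntervalAvg

section Power

variable {w : ℝ → ℝ} {s C : ℝ}

lemma A1With.rpow_inv_intervalAvg_rpow_le (hw : ∀ x, 0 ≤ w x) (hloc : LocallyIntegrable w)
    (hs : 0 < s) (hC : 0 < C) (hA1 : A1With (fun x => w x ^ s) C) {a b : ℝ} (hab : a < b) :
    intervalAvg (fun x => w x ^ s) a b ^ (1 / s) ≤ C ^ (1 / s) * intervalAvg w a b := by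
  simp only [one_div]
  set A := intervalAvg (fun x => w x ^ s) a b
  have hA : 0 ≤ A := intervalAvg_nonneg (fun x => Real.rpow_nonneg (hw x) s) hab.le
  have hCs : 0 < C ^ s⁻¹ := Real.rpow_pos_of_pos hC _
  have hint : IntegrableOn w (Set.Ioc a b) :=
    (hloc.integrableOn_isCompact isCompact_Icc).mono_set Set.Ioc_subset_Icc_self
  rw [← div_le_iff₀' hCs]
  refine le_intervalAvg_of_ae_le hab hint ?_
  filter_upwards [ae_restrict_of_ae hA1, ae_restrict_mem measurableSet_Ioc] with x hx hmem
  have hAx : A ≤ C * w x ^ s := hx a b hab (Set.Ioc_subset_Icc_self hmem)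
  rw [div_le_iff₀' hCs, Real.rpow_inv_le_iff_of_pos hA (mul_nonneg hCs.le (hw x)) hs,
    Real.mul_rpow hCs.le (hw x), Real.rpow_inv_rpow hC.le hs.ne']
  exact hAx

lemma memRH_of_memA1_rpow (hw : ∀ x, 0 ≤ w x) (hloc : LocallyIntegrable w) (hs : 0 < s)
    (hA1 : MemA1 fun x => w x ^ s) : MemRH s w := by
  obtain ⟨C, hC, hA1⟩ := hA1
  exact ⟨C ^ (1 / s), Real.rpow_pos_of_pos hC _,
    fun a b hab => hA1.rpow_inv_intervalAvg_rpow_le hw hloc hs hC hab⟩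

lemma A1With.rpow_of_reverseHolder {C₁ C₂ : ℝ} (hw : ∀ x, 0 ≤ w x) (hs : 0 < s)
    (hC₁ : 0 ≤ C₁) (hC₂ : 0 ≤ C₂) (hA1 : A1With w C₁)
    (hRH : ∀ a b : ℝ, a < b →
      intervalAvg (fun x => w x ^ s) a b ^ (1 / s) ≤ C₂ * intervalAvg w a b) :
    A1With (fun x => w x ^ s) ((C₂ * C₁) ^ s) := by
  filter_upwards [hA1] with x hx a b hab hmem
  have hA : 0 ≤ intervalAvg (fun x => w x ^ s) a b :=
    intervalAvg_nonneg (fun x => Real.rpow_nonneg (hw x) s) hab.le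
  have hchain : intervalAvg (fun x => w x ^ s) a b ^ s⁻¹ ≤ C₂ * C₁ * w x := by
    rw [← one_div, mul_assoc]
    exact (hRH a b hab).trans (mul_le_mul_of_nonneg_left (hx a b hab hmem) hC₂)
  rwa [Real.rpow_inv_le_iff_of_pos hA (by have := hw x; positivity) hs,
    Real.mul_rpow (mul_nonneg hC₂ hC₁) (hw x)] at hchain

lemma MemA1.rpow_of_memRH (hw : ∀ x, 0 ≤ w x) (hs : 0 < s) (hA1 : MemA1 w) (hRH : MemRH s w) :
    MemA1 fun x => w x ^ s := by
  obtain ⟨C₁, hC₁, hA1⟩ := hA1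
  obtain ⟨C₂, hC₂, hRH⟩ := hRH
  exact ⟨(C₂ * C₁) ^ s, Real.rpow_pos_of_pos (mul_pos hC₂ hC₁) s,
    hA1.rpow_of_reverseHolder hw hs hC₁.le hC₂.le hRH⟩

end Power

theorem A1_power_reverse_holder (w : ℝ → ℝ) (hw : ∀ x, 0 < w x)
    (hloc : MeasureTheory.LocallyIntegrable w) (s : ℝ) (hs : 1 < s) :
    ((MemA1 w ∧ MemA1 (fun x => w x ^ s)) → MemRH s w) ∧
    ((MemA1 w ∧ MemRH s w) → MemAinf (fun x => w x ^ s)) := by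
  have hw₀ : ∀ x, 0 ≤ w x := fun x => (hw x).le
  have hs₀ : 0 < s := zero_lt_one.trans hs
  exact ⟨fun ⟨_, hA1s⟩ => memRH_of_memA1_rpow hw₀ hloc hs₀ hA1s,
    fun ⟨hA1, hRH⟩ => Or.inl (hA1.rpow_of_memRH hw₀ hs₀ hRH)⟩
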